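/- Let x be an infinite word over a finite alphabet, let b ≥ 2, and suppose 1 < C < 2 is such that there are arbitrarily large n with r(n, x) ≤ Cn, where x takes values in {0, ..., b−1}. If x is not ultimately periodic, then the irrationality exponent of ξ = Σ_{k≥1} x_k/b^k satisfies μ(ξ) ≥ 1 + 1/(C − 1). -/

import Mathlib

open Filter

def UltimatelyPeriodic {A : Type*} (x : ℕ → A) : Prop :=
  ∃ N T : ℕ, 0 < T ∧ ∀ k ≥ N, x (k + T) = x k

/-- The set of lengths `m` of prefixes of `x` whose last `n` letters occur
a second time inside the prefix. -/
def returnSet {A : Type*} (x : ℕ → A) (n : ℕ) : Set ℕ :=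
  {m : ℕ | ∃ i : ℕ, i + n < m ∧ ∀ k < n, x (i + k) = x (m - n + k)}

/-- `r(n, x)`: the length of the smallest prefix of `x` containing two
(possibly overlapping) occurrences of some word of length `n`. -/
noncomputable def minReturn {A : Type*} (x : ℕ → A) (n : ℕ) : ℕ :=
  sInf (returnSet x n)

/-- The irrationality exponent of `ξ`, as an extended real: the supremum of
all real `μ` such that `|ξ - p/q| < q^(-μ)` has infinitely many rational
solutions `p/q` with `q ≥ 1`. -/
noncomputable def irrationalityExponent (ξ : ℝ) : EReal :=
  sSup {e : EReal | ∃ μ : ℝ, e = (μ : EReal) ∧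
    {pq : ℤ × ℕ | 1 ≤ pq.2 ∧ |ξ - pq.1 / pq.2| < (pq.2 : ℝ) ^ (-μ)}.Infinite}

/-!
Write `ξ = 0.a₀a₁a₂…` in base `b` and `Tⱼ = 0.aⱼaⱼ₊₁…` for its tails, so that `bʲ ξ = Mⱼ + Tⱼ`
with `Mⱼ ∈ ℤ`. If the word of length `n` at position `i` reappears at position `j > i`, then `Tᵢ`
and `Tⱼ` share their first `n` digits, and `q = bʲ - bⁱ`, `p = Mⱼ - Mᵢ` satisfy
`|q ξ - p| = |Tⱼ - Tᵢ| ≤ b⁻ⁿ`. For the first return, `j + n = r(n, x) ≤ C n`, so `q < b^((C-1)n)`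
and `|ξ - p/q| < q^(-1 - 1/(C-1))`. Non-periodicity makes `ξ` irrational (for `ξ = p/q` the tails
`Tⱼ ∈ [0, 1)` lie in `q⁻¹ ℤ`, two of them coincide, and equal tails have equal digits), so these
approximations, whose error tends to `0`, are infinitely many.
-/

theorem UltimatelyPeriodic.comp {A B : Type*} {x : ℕ → A} (h : UltimatelyPeriodic x) (f : A → B) :
    UltimatelyPeriodic (f ∘ x) := by
  obtain ⟨N, T, hT, hx⟩ := h
  exact ⟨N, T, hT, fun k hk => congrArg f (hx k hk)⟩

theorem returnSet_nonempty {A : Type*} {x : ℕ → A} (hx : (Set.range x).Finite) (n : ℕ) :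
    (returnSet x n).Nonempty := by
  obtain ⟨i, j, hij, hw⟩ := Set.Finite.exists_lt_map_eq_of_forall_mem
    (f := fun i (k : Fin n) => x (i + k)) (t := Set.univ.pi fun _ => Set.range x)
    (fun i => by simp) (Set.Finite.pi fun _ => hx)
  refine ⟨j + n, i, by omega, fun k hk => ?_⟩
  simpa using congrFun hw ⟨k, hk⟩

namespace Real

variable {b : ℕ}

theorem ofDigits_lt_one {a : ℕ → Fin b} {i : ℕ} (hi : (a i : ℕ) + 1 < b) : ofDigits a < 1 := by
  have hb : 1 < b := by omega
  rw [← ofDigits_const_last_eq_one' hb]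
  refine Summable.tsum_lt_tsum (i := i) (fun k => ?_) ?_ summable_ofDigitsTerm
    summable_ofDigitsTerm
  · unfold ofDigitsTerm
    gcongr
    exact_mod_cast Nat.le_sub_one_of_lt (a k).isLt
  · unfold ofDigitsTerm
    gcongr
    exact_mod_cast Nat.lt_sub_of_add_lt hi

theorem mul_ofDigits (a : ℕ → Fin b) :
    b * ofDigits a = a 0 + ofDigits (fun i => a (i + 1)) := by
  rcases Nat.eq_zero_or_pos b with rfl | hb
  · exact (a 0).elim0
  rw [ofDigits_eq_sum_add_ofDigits a 1, Finset.sum_range_one, ofDigitsTerm]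
  field_simp
  ring

theorem exists_pow_mul_ofDigits_eq_intCast_add (a : ℕ → Fin b) (n : ℕ) :
    ∃ M : ℤ, b ^ n * ofDigits a = M + ofDigits (fun i => a (i + n)) := by
  induction n with
  | zero => exact ⟨0, by simp⟩
  | succ n ih =>
    obtain ⟨M, hM⟩ := ih
    refine ⟨b * M + a n, ?_⟩
    have := mul_ofDigits (fun i => a (i + n))
    simp only [zero_add, Nat.add_right_comm _ 1 n, add_assoc] at this
    rw [pow_succ', mul_assoc, hM, mul_add, this]
    push_cast
    ring

theorem val_zero_eq_floor_mul_ofDigits {a : ℕ → Fin b} (h : ofDigits (fun i => a (i + 1)) < 1) :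
    (a 0 : ℕ) = ⌊b * ofDigits a⌋₊ := by
  rw [mul_ofDigits, add_comm, Nat.floor_add_natCast (ofDigits_nonneg _),
    Nat.floor_eq_zero.2 h, zero_add]

theorem digit_eq_of_ofDigits_shift_eq {a : ℕ → Fin b}
    (ha : ∀ n, ofDigits (fun i => a (i + n)) < 1) {n m : ℕ}
    (h : ofDigits (fun i => a (i + n)) = ofDigits (fun i => a (i + m))) : a n = a m := by
  have hfloor (n : ℕ) : (a n : ℕ) = ⌊b * ofDigits (fun i => a (i + n))⌋₊ := by
    simpa using val_zero_eq_floor_mul_ofDigits (a := fun i => a (i + n))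
      (by convert ha (n + 1) using 4; omega)
  exact Fin.ext (by rw [hfloor, hfloor, h])

theorem shift_eq_of_ofDigits_shift_eq {a : ℕ → Fin b}
    (ha : ∀ n, ofDigits (fun i => a (i + n)) < 1) {n m : ℕ}
    (h : ofDigits (fun i => a (i + n)) = ofDigits (fun i => a (i + m))) (k : ℕ) :
    a (k + n) = a (k + m) := by
  induction k generalizing n m with
  | zero => simpa using digit_eq_of_ofDigits_shift_eq ha h
  | succ k ih =>
    have hdigit := digit_eq_of_ofDigits_shift_eq ha h
    have hn := mul_ofDigits (fun i => a (i + n))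
    have hm := mul_ofDigits (fun i => a (i + m))
    simp only [zero_add, Nat.add_right_comm _ 1, add_assoc] at hn hm
    simpa [Nat.add_right_comm _ 1, add_assoc] using ih (n := n + 1) (m := m + 1) (by
      rw [hdigit, h] at hn; linarith)

theorem ofDigits_shift_lt_one {a : ℕ → Fin b} (ha : ¬ UltimatelyPeriodic a) (n : ℕ) :
    ofDigits (fun i => a (i + n)) < 1 := by
  obtain ⟨i, hi⟩ : ∃ i, (a (i + n) : ℕ) + 1 < b := by
    by_contra! h
    have hlast (j : ℕ) : (a (j + n) : ℕ) = b - 1 := by have := (a (j + n)).isLt; grind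
    refine ha ⟨n, 1, one_pos, fun k hk => Fin.ext ?_⟩
    obtain ⟨j, rfl⟩ := Nat.exists_eq_add_of_le' hk
    rw [Nat.add_right_comm, hlast, hlast]
  exact ofDigits_lt_one hi

theorem irrational_ofDigits {a : ℕ → Fin b} (ha : ¬ UltimatelyPeriodic a) :
    Irrational (ofDigits a) := by
  rintro ⟨r, hr⟩
  have hden : (r.den : ℝ) * ofDigits a = r.num := by
    rw [← hr, Rat.cast_def]
    field_simp
  choose M hM using exists_pow_mul_ofDigits_eq_intCast_add a
  set z : ℕ → ℤ := fun n => b ^ n * r.num - r.den * M n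
  have hz (n : ℕ) : (z n : ℝ) = r.den * ofDigits (fun i => a (i + n)) := by
    push_cast [z]
    linear_combination r.den * hM n - (b : ℝ) ^ n * hden
  have hz_mem (n : ℕ) : z n ∈ Set.Ico 0 (r.den : ℤ) := by
    constructor
    · exact_mod_cast (show (0 : ℝ) ≤ z n by
        rw [hz n]; exact mul_nonneg r.den.cast_nonneg (ofDigits_nonneg _))
    · exact_mod_cast (show (z n : ℝ) < r.den by
        rw [hz n]; exact mul_lt_of_lt_one_right (by positivity) (ofDigits_shift_lt_one ha n))
  obtain ⟨n, m, hnm, hzeq⟩ := (Set.finite_Ico _ _).exists_lt_map_eq_of_forall_mem hz_mem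
  have hshift : ofDigits (fun i => a (i + n)) = ofDigits (fun i => a (i + m)) := by
    have := hz n
    rw [hzeq, hz m] at this
    exact (mul_left_cancel₀ (by positivity) this).symm
  refine ha ⟨n, m - n, by omega, fun k hk => ?_⟩
  obtain ⟨j, rfl⟩ := Nat.exists_eq_add_of_le' hk
  rw [show j + n + (m - n) = j + m by omega,
    shift_eq_of_ofDigits_shift_eq (ofDigits_shift_lt_one ha) hshift j]

theorem exists_abs_ofDigits_sub_div_le {a : ℕ → Fin b} (hb : 1 < b) {i j n : ℕ} (hij : i < j)
    (h : ∀ k < n, a (k + i) = a (k + j)) :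
    ∃ p : ℤ, ∃ q : ℕ, 0 < q ∧ q < b ^ j ∧
      |ofDigits a - p / q| ≤ ((b : ℝ) ^ n)⁻¹ / q := by
  obtain ⟨Mi, hMi⟩ := exists_pow_mul_ofDigits_eq_intCast_add a i
  obtain ⟨Mj, hMj⟩ := exists_pow_mul_ofDigits_eq_intCast_add a j
  have hpow : b ^ i < b ^ j := Nat.pow_lt_pow_right hb hij
  have hpos : 0 < b ^ i := by positivity
  refine ⟨Mj - Mi, b ^ j - b ^ i, by omega, by omega, ?_⟩
  have hq : (0 : ℝ) < (b ^ j - b ^ i : ℕ) := by exact_mod_cast Nat.sub_pos_of_lt hpow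
  rw [le_div_iff₀ hq, ← abs_of_pos hq, ← abs_mul, abs_of_pos hq]
  calc |(ofDigits a - (Mj - Mi : ℤ) / (b ^ j - b ^ i : ℕ)) * (b ^ j - b ^ i : ℕ)|
      = |ofDigits (fun k => a (k + j)) - ofDigits (fun k => a (k + i))| := by
        congr 1
        rw [sub_mul, div_mul_cancel₀ _ hq.ne', Nat.cast_sub hpow.le]
        push_cast
        linear_combination hMj - hMi
    _ ≤ ((b : ℝ) ^ n)⁻¹ := abs_ofDigits_sub_ofDigits_le fun k hk => (h k hk).symm

end Real

theorem Irrational.infinite_of_forall_exists_abs_sub_lt {ξ : ℝ} (hξ : Irrational ξ)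
    {S : Set (ℤ × ℕ)} (h : ∀ ε > 0, ∃ pq ∈ S, |ξ - pq.1 / pq.2| < ε) : S.Infinite := by
  intro hS
  have hmem : ξ ∈ closure ((fun pq : ℤ × ℕ => (pq.1 / pq.2 : ℝ)) '' S) :=
    Metric.mem_closure_iff.2 fun ε hε =>
      let ⟨pq, hpq, hlt⟩ := h ε hε
      ⟨_, ⟨pq, hpq, rfl⟩, by rwa [Real.dist_eq]⟩
  rw [(hS.image _).isClosed.closure_eq] at hmem
  obtain ⟨pq, -, hpq⟩ := hmem
  exact hξ ⟨pq.1 / pq.2, by push_cast; exact hpq⟩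

theorem le_irrationalityExponent {ξ μ : ℝ} (hξ : Irrational ξ)
    (h : ∀ ε > 0, ∃ p : ℤ, ∃ q : ℕ, 1 ≤ q ∧ |ξ - p / q| < (q : ℝ) ^ (-μ) ∧ |ξ - p / q| < ε) :
    (μ : EReal) ≤ irrationalityExponent ξ :=
  le_sSup ⟨μ, rfl, hξ.infinite_of_forall_exists_abs_sub_lt fun ε hε =>
    let ⟨p, q, hq, hμ, hε⟩ := h ε hε
    ⟨(p, q), ⟨hq, hμ⟩, hε⟩⟩

theorem inv_div_lt_rpow_neg {q β μ : ℝ} (hq : 0 < q) (hβ : q ^ (μ - 1) < β) :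
    β⁻¹ / q < q ^ (-μ) := by
  calc β⁻¹ / q < (q ^ (μ - 1))⁻¹ / q := by gcongr
    _ = q ^ (-μ) := by
      rw [Real.rpow_sub_one hq.ne', Real.rpow_neg hq.le]
      field_simp

theorem rpow_inv_sub_one_lt_pow {β q C : ℝ} (hβ : 1 ≤ β) (hq : 0 ≤ q) (hC : 1 < C) {m n : ℕ}
    (hnm : n ≤ m) (hm : (m : ℝ) ≤ C * n) (hqm : q < β ^ (m - n)) : q ^ (C - 1)⁻¹ < β ^ n := by
  rw [Real.rpow_inv_lt_iff_of_pos hq (by positivity) (by linarith),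
    ← Real.rpow_natCast_mul (by positivity)]
  calc q < β ^ (m - n) := hqm
    _ = β ^ ((m - n : ℕ) : ℝ) := (Real.rpow_natCast _ _).symm
    _ ≤ β ^ (n * (C - 1)) :=
      Real.rpow_le_rpow_of_exponent_le hβ (by rw [Nat.cast_sub hnm]; linarith)

theorem stmt14_general {b : ℕ} (hb : 2 ≤ b) (x : ℕ → ℕ) (hx : ∀ k, x k < b)
    (hnp : ¬ UltimatelyPeriodic x) (C : ℝ) (hC1 : 1 < C)
    (hoften : ∀ N : ℕ, ∃ n : ℕ, N ≤ n ∧ (minReturn x n : ℝ) ≤ C * n) :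
    ((1 + 1 / (C - 1) : ℝ) : EReal) ≤
      irrationalityExponent (∑' k : ℕ, (x k : ℝ) / b ^ (k + 1)) := by
  set a : ℕ → Fin b := fun k => ⟨x k, hx k⟩
  have hξ : ∑' k : ℕ, (x k : ℝ) / b ^ (k + 1) = Real.ofDigits a := by
    simp [Real.ofDigits, Real.ofDigitsTerm, div_eq_mul_inv, a]
  have hbR : (1 : ℝ) < b := by exact_mod_cast hb
  rw [hξ]
  refine le_irrationalityExponent (Real.irrational_ofDigits fun h => hnp (h.comp Fin.val))
    fun ε hε => ?_
  obtain ⟨N, hN⟩ := exists_pow_lt_of_lt_one hε (inv_lt_one_of_one_lt₀ hbR)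
  obtain ⟨n, hNn, hn⟩ := hoften N
  obtain ⟨i, hi, hrep⟩ : minReturn x n ∈ returnSet x n := Nat.sInf_mem
    (returnSet_nonempty ((Set.finite_Iio b).subset (Set.range_subset_iff.2 hx)) n)
  obtain ⟨p, q, hq, hqb, happrox⟩ := Real.exists_abs_ofDigits_sub_div_le (a := a) (by omega)
    (i := i) (j := minReturn x n - n) (by omega)
    fun k hk => Fin.ext (by simpa [add_comm] using hrep k hk)
  have hqR : (1 : ℝ) ≤ q := by exact_mod_cast hq
  refine ⟨p, q, hq, happrox.trans_lt (inv_div_lt_rpow_neg (by positivity) ?_), ?_⟩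
  · rw [show 1 + 1 / (C - 1) - 1 = (C - 1)⁻¹ by ring]
    exact rpow_inv_sub_one_lt_pow hbR.le q.cast_nonneg hC1 (by omega) hn (by exact_mod_cast hqb)
  · calc |Real.ofDigits a - p / q| ≤ ((b : ℝ) ^ n)⁻¹ / q := happrox
      _ ≤ (b : ℝ)⁻¹ ^ N := by
        rw [inv_pow]
        exact (div_le_self (by positivity) hqR).trans (by gcongr; exact hbR.le)
      _ < ε := hN

theorem stmt14 {b : ℕ} (hb : 2 ≤ b) (x : ℕ → ℕ) (hx : ∀ k, x k < b)
    (hnp : ¬ UltimatelyPeriodic x) (C : ℝ) (hC1 : 1 < C) (hC2 : C < 2)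
    (hoften : ∀ N : ℕ, ∃ n : ℕ, N ≤ n ∧ (minReturn x n : ℝ) ≤ C * n) :
    ((1 + 1 / (C - 1) : ℝ) : EReal) ≤
      irrationalityExponent (∑' k : ℕ, (x k : ℝ) / b ^ (k + 1)) :=
  stmt14_general hb x hx hnp C hC1 hoften
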